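/- Let E be a topological graph and μ a finite path with d(μ) ∈ E⁰_inf (i.e., d(μ) has no neighbourhood with compact r-preimage). Then for every open set U ⊆ E^{|μ|} containing μ, the set r⁻¹(d(U)) cannot be written as a finite union of relatively compact open subsets of E¹. In particular, if d(μ) ∈ E⁰_sg, no basic open set Z(U) ∩ Z(K)ᶜ containing μ with |U| = |μ| admits a continuation covering. -/
import Mathlib


open Set Topology

variable {E0 E1 : Type*} [TopologicalSpace E0] [TopologicalSpace E1]

/-- `E⁰_fin`: vertices with a neighbourhood whose `r`-preimage is compact. -/
def E0fin (r : E1 → E0) : Set E0 := {v | ∃ V ∈ nhds v, IsCompact (r ⁻¹' V)}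

/-- `E⁰_sce = E⁰ \ closure (r(E¹))`. -/
def E0sce (r : E1 → E0) : Set E0 := (closure (Set.range r))ᶜ

/-- `E⁰_rg = E⁰_fin \ closure (E⁰_sce)`, the regular vertices. -/
def E0rg (r : E1 → E0) : Set E0 := E0fin r \ closure (E0sce r)

/-- `E⁰_inf = E⁰ \ E⁰_fin`. -/
def E0inf (r : E1 → E0) : Set E0 := (E0fin r)ᶜ

/-- `E⁰_sg = E⁰_inf ∪ closure (E⁰_sce)`, the singular vertices. -/
def E0sg (r : E1 → E0) : Set E0 := E0inf r ∪ closure (E0sce r)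

/-- The chain condition for a tuple of `n` edges: `d μᵢ = r μ_{i+1}`. -/
def ChainN (d r : E1 → E0) (n : ℕ) (f : Fin n → E1) : Prop :=
  ∀ (i : ℕ) (h : i + 1 < n), d (f ⟨i, Nat.lt_of_succ_lt h⟩) = r (f ⟨i + 1, h⟩)

/-- The space `Eⁿ` of paths of length `n`, realized as a subset of
`E⁰ × (E¹)ⁿ` (the first coordinate being the range vertex). -/
def PathN (d r : E1 → E0) (n : ℕ) : Set (E0 × (Fin n → E1)) :=
  {p | ChainN d r n p.2 ∧ ∀ h : 0 < n, p.1 = r (p.2 ⟨0, h⟩)}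

/-- The space of all finite and infinite paths of a topological graph. -/
def TPath (d r : E1 → E0) : Type _ :=
  (Σ n : ℕ, {p : E0 × (Fin n → E1) // p ∈ PathN d r n}) ⊕
    {q : E0 × (ℕ → E1) // (∀ i : ℕ, d (q.2 i) = r (q.2 (i + 1))) ∧ q.1 = r (q.2 0)}

/-- Truncation of a length-`n` tuple to length `k ≤ n`. -/
def truncT (k n : ℕ) (h : k ≤ n) (p : E0 × (Fin n → E1)) : E0 × (Fin k → E1) :=
  (p.1, fun i => p.2 ⟨i.1, lt_of_lt_of_le i.2 h⟩)

/-- The cylinder set `Z(A)` of all paths whose length-`n` prefix lies in `A`. -/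
def ZT (d r : E1 → E0) (n : ℕ) (A : Set (E0 × (Fin n → E1))) : Set (TPath d r) :=
  Sum.elim (fun q => ∃ h : n ≤ q.1, truncT n q.1 h q.2.1 ∈ A)
    (fun q => ((q.1.1, fun i : Fin n => q.1.2 i.1) : E0 × (Fin n → E1)) ∈ A)

/-- The domain map `dₙ` on length-`n` tuples. -/
def dmapN (d : E1 → E0) (n : ℕ) (p : E0 × (Fin n → E1)) : E0 :=
  if h : 0 < n then d (p.2 ⟨n - 1, Nat.sub_lt h Nat.one_pos⟩) else p.1

/-- The length of a finite or infinite path. -/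
def lenT (d r : E1 → E0) (p : TPath d r) : ℕ∞ :=
  Sum.elim (fun q => (q.1 : ℕ∞)) (fun _ => (⊤ : ℕ∞)) p

theorem dmapN_image_mem_nhds_aux (d r : E1 → E0) (hr : Continuous r) (hd : IsLocalHomeomorph d) :
    ∀ (n : ℕ) (μ : E0 × (Fin n → E1)), μ ∈ PathN d r n →
    ∀ U : Set (E0 × (Fin n → E1)), IsOpen U → μ ∈ U →
      dmapN d n '' (U ∩ PathN d r n) ∈ nhds (dmapN d n μ) := by
  intro n
  induction n with
  | zero =>
    intro μ hμ U hU hμU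
    have hP : PathN d r 0 = univ := by
      ext p
      simp [PathN, ChainN]
    have hdm : ∀ p : E0 × (Fin 0 → E1), dmapN d 0 p = p.1 := by
      intro p; simp [dmapN]
    rw [hP, inter_univ]
    have : dmapN d 0 '' U = Prod.fst '' U := by
      apply image_congr; intro p _; exact hdm p
    rw [this, hdm μ]
    exact isOpenMap_fst.image_mem_nhds (hU.mem_nhds hμU)
  | succ n IH =>
    rintro ⟨v, f⟩ ⟨hchain, hfst⟩ U hU hμU
    -- extract a box neighbourhood inside U
    obtain ⟨V0, Vf, hV0, hVf, hv0, hfVf, hsub⟩ := isOpen_prod_iff.mp hU v f hμU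
    obtain ⟨I, w, hw, hIsub⟩ := isOpen_pi_iff.mp hVf f hfVf
    set W : Fin (n+1) → Set E1 := fun i => if i ∈ I then w i else univ with hWdef
    have hWopen : ∀ i, IsOpen (W i) := by
      intro i; by_cases h : i ∈ I <;> simp only [hWdef, h, if_true, if_false]
      · exact (hw i h).1
      · exact isOpen_univ
    have hfW : ∀ i, f i ∈ W i := by
      intro i; by_cases h : i ∈ I <;> simp only [hWdef, h, if_true, if_false]
      · exact (hw i h).2
      · exact mem_univ _
    have hbox : ∀ (a : E0) (g : Fin (n+1) → E1), a ∈ V0 → (∀ i, g i ∈ W i) →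
        (a, g) ∈ U := by
      intro a g ha hg
      refine hsub (mk_mem_prod ha (hIsub fun i hi => ?_))
      have hi' : i ∈ I := hi
      have := hg i
      simpa [hWdef, hi'] using this
    -- truncated path
    set μ' : E0 × (Fin n → E1) := (v, fun i => f i.castSucc) with hμ'def
    have hμ' : μ' ∈ PathN d r n := by
      constructor
      · intro i h
        exact hchain i (Nat.lt_succ_of_lt h)
      · intro h
        exact hfst (Nat.succ_pos n)
    set U'' : Set (E0 × (Fin n → E1)) :=
      V0 ×ˢ Set.pi univ (fun i : Fin n => W i.castSucc) with hU''def
    have hU''open : IsOpen U'' :=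
      hV0.prod (isOpen_set_pi finite_univ fun a _ => hWopen _)
    have hμ'U'' : μ' ∈ U'' := ⟨hv0, fun i _ => hfW _⟩
    have hS' := IH μ' hμ' U'' hU''open hμ'U''
    set S' := dmapN d n '' (U'' ∩ PathN d r n) with hS'def
    have hrlast : dmapN d n μ' = r (f (Fin.last n)) := by
      rcases Nat.eq_zero_or_pos n with hn | hn
      · subst hn
        have : dmapN d 0 μ' = μ'.1 := by simp [dmapN]
        rw [this]
        exact hfst Nat.one_pos
      · have h1 : dmapN d n μ' = d (f (Fin.castSucc ⟨n - 1, Nat.sub_lt hn Nat.one_pos⟩)) := by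
          simp [dmapN, hn, hμ'def]
        have h2 : (Fin.castSucc ⟨n - 1, Nat.sub_lt hn Nat.one_pos⟩ : Fin (n+1)) =
            ⟨n - 1, by omega⟩ := rfl
        have h3 := hchain (n - 1) (by omega)
        have h4 : (⟨n - 1 + 1, by omega⟩ : Fin (n+1)) = Fin.last n := by
          apply Fin.ext; simp [Fin.last]; omega
        rw [h1, h2]
        rw [h4] at h3
        convert h3 using 3
      -- done
    have hrlast' : r (f (Fin.last n)) ∈ interior S' := by
      rw [← hrlast]
      exact mem_interior_iff_mem_nhds.mpr hS'
    obtain ⟨e, hes, hde⟩ := hd (f (Fin.last n))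
    set W' : Set E1 := e.source ∩ (W (Fin.last n) ∩ r ⁻¹' interior S') with hW'def
    have hW'open : IsOpen W' :=
      e.open_source.inter ((hWopen _).inter (isOpen_interior.preimage hr))
    have hfW' : f (Fin.last n) ∈ W' := ⟨hes, hfW _, hrlast'⟩
    have himg_open : IsOpen (d '' W') := by
      rw [hde]
      exact e.isOpen_image_of_subset_source hW'open inter_subset_left
    have hsub' : d '' W' ⊆ dmapN d (n+1) '' (U ∩ PathN d r (n+1)) := by
      rintro y ⟨x, hx, rfl⟩
      obtain ⟨hxe, hxW, hxr⟩ := hx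
      obtain ⟨ν, ⟨hνU'', hνP⟩, hνd⟩ := interior_subset hxr
      have hsnoc : ∀ (j : ℕ) (hj : j < n) (hj' : j < n + 1),
          (Fin.snoc ν.2 x : Fin (n+1) → E1) ⟨j, hj'⟩ = ν.2 ⟨j, hj⟩ := by
        intro j hj hj'
        have : (⟨j, hj'⟩ : Fin (n+1)) = Fin.castSucc ⟨j, hj⟩ := rfl
        rw [this, Fin.snoc_castSucc]
      have hsnoclast : ∀ (hj : n < n + 1),
          (Fin.snoc ν.2 x : Fin (n+1) → E1) ⟨n, hj⟩ = x := by
        intro hj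
        have : (⟨n, hj⟩ : Fin (n+1)) = Fin.last n := rfl
        rw [this, Fin.snoc_last]
      have hpP : (ν.1, Fin.snoc ν.2 x) ∈ PathN d r (n+1) := by
        constructor
        · intro i h
          show d ((Fin.snoc ν.2 x : Fin (n+1) → E1) ⟨i, Nat.lt_of_succ_lt h⟩) =
            r ((Fin.snoc ν.2 x : Fin (n+1) → E1) ⟨i + 1, h⟩)
          rcases Nat.lt_or_ge (i + 1) n with h1 | h1
          · rw [hsnoc i (by omega) _, hsnoc (i+1) h1 _]
            exact hνP.1 i h1
          · have hi1 : i + 1 = n := by omega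
            have hn : 0 < n := by omega
            have h5 : (⟨i + 1, h⟩ : Fin (n+1)) = ⟨n, by omega⟩ := Fin.ext (by simpa using hi1)
            rw [hsnoc i (by omega) _, h5, hsnoclast _]
            have h6 : dmapN d n ν = d (ν.2 ⟨n - 1, Nat.sub_lt hn Nat.one_pos⟩) := by
              simp [dmapN, hn]
            have h7 : (⟨i, by omega⟩ : Fin n) = ⟨n - 1, Nat.sub_lt hn Nat.one_pos⟩ :=
              Fin.ext (by simp; omega)
            rw [h7]
            rw [h6] at hνd
            exact hνd
        · intro h
          show ν.1 = r ((Fin.snoc ν.2 x : Fin (n+1) → E1) ⟨0, h⟩)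
          rcases Nat.eq_zero_or_pos n with hn | hn
          · subst hn
            rw [hsnoclast h]
            have : dmapN d 0 ν = ν.1 := by simp [dmapN]
            rw [this] at hνd
            exact hνd
          · rw [hsnoc 0 hn h]
            exact hνP.2 hn
      have hpU : (ν.1, Fin.snoc ν.2 x) ∈ U := by
        apply hbox ν.1 _ hνU''.1
        intro i
        refine Fin.lastCases ?_ ?_ i
        · rw [Fin.snoc_last]; exact hxW
        · intro j
          rw [Fin.snoc_castSucc]
          exact hνU''.2 j (mem_univ j)
      have hpd : dmapN d (n+1) (ν.1, Fin.snoc ν.2 x) = d x := by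
        simp only [dmapN, Nat.succ_pos, dif_pos, Nat.add_sub_cancel]
        rw [hsnoclast]
      exact ⟨(ν.1, Fin.snoc ν.2 x), ⟨hpU, hpP⟩, hpd⟩
    have hdμ : dmapN d (n+1) (v, f) = d (f (Fin.last n)) := by
      simp only [dmapN, Nat.succ_pos, dif_pos, Nat.add_sub_cancel]
      rfl
    rw [hdμ]
    exact mem_nhds_iff.mpr ⟨d '' W', hsub', himg_open, ⟨f (Fin.last n), hfW', rfl⟩⟩

theorem part1_aux [T2Space E0] [LocallyCompactSpace E0]
    (d r : E1 → E0) (hr : Continuous r) (hd : IsLocalHomeomorph d)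
    (n : ℕ) (μ : E0 × (Fin n → E1)) (hμ : μ ∈ PathN d r n)
    (hinf : dmapN d n μ ∈ E0inf r) :
    ∀ U : Set (E0 × (Fin n → E1)), IsOpen U → μ ∈ U →
      ¬ ∃ (k : ℕ) (B : Fin k → Set E1),
          (∀ i, IsOpen (B i)) ∧ (∀ i, IsCompact (closure (B i))) ∧
          r ⁻¹' (dmapN d n '' (U ∩ PathN d r n)) = ⋃ i, B i := by
  rintro U hUo hμU ⟨k, B, hBo, hBc, hBeq⟩
  have hS := dmapN_image_mem_nhds_aux d r hr hd n μ hμ U hUo hμU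
  obtain ⟨V, hVmem, hVsub, hVcomp⟩ := local_compact_nhds hS
  refine hinf ⟨V, hVmem, ?_⟩
  refine IsCompact.of_isClosed_subset (isCompact_iUnion fun i => hBc i)
    (hVcomp.isClosed.preimage hr) ?_
  calc r ⁻¹' V ⊆ r ⁻¹' (dmapN d n '' (U ∩ PathN d r n)) := preimage_mono hVsub
    _ = ⋃ i, B i := hBeq
    _ ⊆ ⋃ i, closure (B i) := iUnion_mono fun i => subset_closure

/-- if `d μ ∈ E⁰_inf` then for every open `U ∋ μ` in `E^{|μ|}` the
set `r⁻¹(d(U))` is not a finite union of relatively compact open subsets of `E¹`;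
in particular, if `d μ ∈ E⁰_sg`, no basic open set `Z(U) ∩ Z(K)ᶜ` containing `μ`
with `|U| = |μ|` admits a continuation covering (a finite family of pairwise
disjoint relatively compact open sets, each mapped homeomorphically by `d` onto
its image, with union `r⁻¹(d(U))`, `d(U)` being contained in `r(E¹)`). -/
theorem stmt_19 [LocallyCompactSpace E0] [T2Space E0]
    [LocallyCompactSpace E1] [T2Space E1]
    (d r : E1 → E0) (hr : Continuous r) (hd : IsLocalHomeomorph d)
    (n : ℕ) (μ : E0 × (Fin n → E1)) (hμ : μ ∈ PathN d r n) :
    (dmapN d n μ ∈ E0inf r →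
      ∀ U : Set (E0 × (Fin n → E1)), IsOpen U → μ ∈ U →
        ¬ ∃ (k : ℕ) (B : Fin k → Set E1),
            (∀ i, IsOpen (B i)) ∧ (∀ i, IsCompact (closure (B i))) ∧
            r ⁻¹' (dmapN d n '' (U ∩ PathN d r n)) = ⋃ i, B i) ∧
    (dmapN d n μ ∈ E0sg r →
      ∀ U : Set (E0 × (Fin n → E1)), IsOpen U →
      ∀ (N : ℕ) (l : Fin N → ℕ) (K : (i : Fin N) → Set (E0 × (Fin (l i) → E1))),
        (∀ i, IsCompact (K i)) →
        (Sum.inl ⟨n, μ, hμ⟩ : TPath d r) ∈ ZT d r n U ∩ (⋃ i, ZT d r (l i) (K i))ᶜ →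
        ¬ (dmapN d n '' (U ∩ PathN d r n) ⊆ Set.range r ∧
            ∃ (k : ℕ) (B : Fin k → Set E1),
              (∀ i, IsOpen (B i)) ∧ (∀ i, IsCompact (closure (B i))) ∧
              (∀ i, Topology.IsEmbedding ((B i).restrict d)) ∧
              Pairwise (Function.onFun Disjoint B) ∧
              r ⁻¹' (dmapN d n '' (U ∩ PathN d r n)) = ⋃ i, B i)) := by
  constructor
  · intro hinf U hUo hμU
    exact part1_aux d r hr hd n μ hμ hinf U hUo hμU
  · intro hsg U hUo N l K hK hmem
    rintro ⟨hrange, k, B, hBo, hBc, hBemb, hBdisj, hBeq⟩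
    have hμU : μ ∈ U := by
      obtain ⟨h, hmem'⟩ := hmem.1
      exact hmem'
    rcases hsg with hinf | hcl
    · exact part1_aux d r hr hd n μ hμ hinf U hUo hμU ⟨k, B, hBo, hBc, hBeq⟩
    · have hS := dmapN_image_mem_nhds_aux d r hr hd n μ hμ U hUo hμU
      obtain ⟨x, hxS, hxsce⟩ := mem_closure_iff_nhds.mp hcl _ hS
      exact hxsce (subset_closure (hrange hxS))
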